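/- arXiv:math/9911268 — 2 statements merged into one kernel-verified Lean document; each statement's English description precedes it below -/
import Mathlib

section
/- Let G be a connected brace, and let X be a set of vertices of G such that |N_G(X)| ≤ 3 and V(G) − X − N_G(X) contains vertices of both color classes of G. Then |X| ≤ 1. -/
open SimpleGraph

universe u v

variable {V : Type u} {W : Type v}

/-- `(A, B)` is a bipartition of the simple graph `G`. -/
def IsBipartition (G : SimpleGraph V) (A B : Set V) : Prop :=
  Disjoint A B ∧ A ∪ B = Set.univ ∧
    ∀ ⦃u v⦄, G.Adj u v → ((u ∈ A ∧ v ∈ B) ∨ (u ∈ B ∧ v ∈ A))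

/-- `G` is `k`-extendable: every matching with at most `k` edges extends
to a perfect matching. -/
def KExtendable (G : SimpleGraph V) (k : ℕ) : Prop :=
  ∀ M : G.Subgraph, M.IsMatching → M.edgeSet.ncard ≤ k →
    ∃ P : G.Subgraph, M ≤ P ∧ P.IsPerfectMatching

/-- A brace is a `2`-extendable bipartite graph. -/
def IsBrace (G : SimpleGraph V) : Prop :=
  (∃ A B, IsBipartition G A B) ∧ KExtendable G 2

/-- `G` has a matching whose vertex set is exactly `S`
(i.e. the subgraph of `G` induced on `S` has a perfect matching). -/
def HasPMOn (G : SimpleGraph V) (S : Set V) : Prop :=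
  ∃ M : G.Subgraph, M.IsMatching ∧ M.verts = S

/-- An orientation of a simple graph: each edge gets exactly one direction. -/
structure GraphOrientation (G : SimpleGraph V) where
  dir : V → V → Prop
  asymm : ∀ u v, dir u v → ¬ dir v u
  adj_iff : ∀ u v, G.Adj u v ↔ (dir u v ∨ dir v u)

open scoped Classical in
/-- The number of edges of the walk `w` traversed in agreement with the
orientation `o`. -/
noncomputable def forwardCount {G : SimpleGraph V} (o : GraphOrientation G) {u v : V}
    (w : G.Walk u v) : ℕ :=
  w.darts.countP fun d => decide (o.dir d.fst d.snd)

/-- `o` is a Pfaffian orientation of `G`: every central even circuit is oddly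
oriented.  (For an even circuit, being oddly oriented with respect to one
traversal direction is equivalent to being oddly oriented with respect to the
other.) -/
def IsPfaffian (G : SimpleGraph V) (o : GraphOrientation G) : Prop :=
  ∀ (v : V) (c : G.Walk v v), c.IsCycle → Even c.length →
    HasPMOn G {x | x ∉ c.support} → Odd (forwardCount o c)

/-- The neighborhood of a vertex set: vertices outside `X` adjacent to `X`. -/
def nbdSet (G : SimpleGraph V) (X : Set V) : Set V :=
  {v | v ∉ X ∧ ∃ x ∈ X, G.Adj x v}

/-- Restriction of `G` to the vertex set `T`, kept on the same vertex type. -/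
def restrictG (G : SimpleGraph V) (T : Set V) : SimpleGraph V where
  Adj x y := G.Adj x y ∧ x ∈ T ∧ y ∈ T
  symm := ⟨fun x y ⟨h, hx, hy⟩ => ⟨h.symm, hy, hx⟩⟩
  loopless := ⟨fun x ⟨h, _, _⟩ => G.loopless.irrefl x h⟩

/-- Every edge of `G` is contained in a matching with vertex set exactly `S`.
(When the edges of `G` lie within `S`, this says that the graph on `S` is
1-extendable.) -/
def OneExtendableOn (G : SimpleGraph V) (S : Set V) : Prop :=
  ∀ ⦃x y⦄, G.Adj x y → ∃ M : G.Subgraph, M.IsMatching ∧ M.verts = S ∧ M.Adj x y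

/-- `G` is 1-extendable: every edge lies in a perfect matching. -/
def OneExtendable (G : SimpleGraph V) : Prop :=
  OneExtendableOn G Set.univ

/-- `G` is `k`-connected: more than `k` vertices, and deleting fewer than
`k` vertices leaves a connected graph. -/
def KConnected (G : SimpleGraph V) [Fintype V] (k : ℕ) : Prop :=
  k < Fintype.card V ∧ ∀ S : Set V, S.ncard < k → (G.induce (Sᶜ : Set V)).Connected

/-- A walk is `M`-alternating if its edges alternately belong and do not
belong to `M`. -/
def IsAltWalk {G : SimpleGraph V} (M : G.Subgraph) {u v : V} (w : G.Walk u v) : Prop :=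
  (∀ (i : ℕ) (h : i < w.edges.length), (w.edges.get ⟨i, h⟩ ∈ M.edgeSet ↔ Even i)) ∨
  (∀ (i : ℕ) (h : i < w.edges.length), (w.edges.get ⟨i, h⟩ ∈ M.edgeSet ↔ Odd i))

/-- A path is `M`-alternating if every internal vertex (vertex of degree two
in the path) is incident with an edge of `M` lying on the path. -/
def IsMAltPath {G : SimpleGraph V} (M : G.Subgraph) {a b : V} (p : G.Walk a b) : Prop :=
  p.IsPath ∧ ∀ x ∈ p.support, x ≠ a → x ≠ b → ∃ y, M.Adj x y ∧ s(x, y) ∈ p.edges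

/-- An `H`-path: a path with at least one edge, both ends in `H`, and
otherwise disjoint from `H`. -/
def IsHPath {G : SimpleGraph V} (H : G.Subgraph) {a b : V} (p : G.Walk a b) : Prop :=
  0 < p.length ∧ a ∈ H.verts ∧ b ∈ H.verts ∧
  (∀ x ∈ p.support, x ≠ a → x ≠ b → x ∉ H.verts) ∧
  ∀ e ∈ p.edges, e ∉ H.edgeSet

/-- Neighborhood of a vertex set inside a subgraph `H`. -/
def nbdSetSub {G : SimpleGraph V} (H : G.Subgraph) (X : Set V) : Set V :=
  {v | v ∉ X ∧ ∃ x ∈ X, H.Adj x v}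

/-- `M` is a perfect matching of the subgraph `H`. -/
def SubgraphPM {G₀ : SimpleGraph V} (H M : G₀.Subgraph) : Prop :=
  M ≤ H ∧ M.IsMatching ∧ M.verts = H.verts

/-- `G` is a 4-sum of the subgraphs `G₁, G₂` of `G₀` along the central
circuit `C` with vertices `a, b, c, d` (in order):
`G₁ ∪ G₂ = G₀`, `G₁ ∩ G₂ = C`, each `Gᵢ` has a vertex not in the other, and
`G` is obtained from `G₀` by deleting some (possibly no) edges of `C`. -/
def IsFourSum (G G₀ : SimpleGraph V) (G₁ G₂ : G₀.Subgraph) (a b c d : V) : Prop :=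
  ([a, b, c, d] : List V).Nodup ∧
  G₀.Adj a b ∧ G₀.Adj b c ∧ G₀.Adj c d ∧ G₀.Adj d a ∧
  HasPMOn G₀ (({a, b, c, d} : Set V)ᶜ) ∧
  G₁ ⊔ G₂ = (⊤ : G₀.Subgraph) ∧
  (G₁ ⊓ G₂).verts = ({a, b, c, d} : Set V) ∧
  (∀ x y, (G₁ ⊓ G₂).Adj x y ↔
      s(x, y) ∈ ({s(a, b), s(b, c), s(c, d), s(d, a)} : Set (Sym2 V))) ∧
  (G₁.verts \ G₂.verts).Nonempty ∧ (G₂.verts \ G₁.verts).Nonempty ∧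
  (∀ x y, G.Adj x y → G₀.Adj x y) ∧
  (∀ x y, G₀.Adj x y →
      G.Adj x y ∨ s(x, y) ∈ ({s(a, b), s(b, c), s(c, d), s(d, a)} : Set (Sym2 V)))

/-- `G` contains `H`: some even subdivision of `H` (each edge replaced by an
internally disjoint path with an odd number of edges) is isomorphic to a
central subgraph of `G`. -/
def Contains (G : SimpleGraph V) (H : SimpleGraph W) : Prop :=
  ∃ (f : W → V) (p : ∀ u v : W, H.Adj u v → G.Walk (f u) (f v)),
    Function.Injective f ∧
    (∀ u v (h : H.Adj u v), (p u v h).IsPath ∧ Odd (p u v h).length) ∧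
    (∀ u v (h : H.Adj u v), p v u h.symm = (p u v h).reverse) ∧
    (∀ u v (h : H.Adj u v) (w : W), f w ∈ (p u v h).support → w = u ∨ w = v) ∧
    (∀ u v u' v' (h : H.Adj u v) (h' : H.Adj u' v'), s(u, v) ≠ s(u', v') →
      ∀ x, x ∈ (p u v h).support → x ∈ (p u' v' h').support →
        (x = f u ∨ x = f v) ∧ (x = f u' ∨ x = f v')) ∧
    HasPMOn G ((Set.range f ∪ {x | ∃ u v, ∃ h : H.Adj u v, x ∈ (p u v h).support})ᶜ)

/-- `K'` is obtained from `K` by a bicontraction: contracting both edges at a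
vertex `u` of degree two (with distinct neighbors `a` and `b`) and deleting
parallel edges. -/
def BicontractAt (K K' : (⊤ : SimpleGraph V).Subgraph) : Prop :=
  ∃ u a b : V, a ≠ b ∧ K.Adj u a ∧ K.Adj u b ∧
    (∀ x, K.Adj u x → x = a ∨ x = b) ∧
    K'.verts = K.verts \ {u, a} ∧
    ∀ x y, K'.Adj x y ↔ (x ∈ K.verts \ {u, a} ∧ y ∈ K.verts \ {u, a} ∧ x ≠ y ∧
      ∃ x' y', K.Adj x' y' ∧ (x' = x ∨ (x = b ∧ (x' = a ∨ x' = u))) ∧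
        (y' = y ∨ (y = b ∧ (y' = a ∨ y' = u))))

/-- `G` weakly contains `H`: `G` has a central subgraph `K` from which a graph
isomorphic to `H` can be obtained by a sequence of bicontractions. -/
def WeaklyContains (G : SimpleGraph V) (H : SimpleGraph W) : Prop :=
  ∃ K : (⊤ : SimpleGraph V).Subgraph,
    (∀ ⦃x y⦄, K.Adj x y → G.Adj x y) ∧
    HasPMOn G (K.vertsᶜ) ∧
    ∃ K' : (⊤ : SimpleGraph V).Subgraph,
      Relation.ReflTransGen BicontractAt K K' ∧ Nonempty (K'.coe ≃g H)

/-- The Heawood graph (LCF notation `[5, -5]⁷`): a 14-cycle together with the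
chords `{i, i+5}` for even `i`. -/
def heawood : SimpleGraph (Fin 14) :=
  SimpleGraph.fromRel (fun i j => j = i + 1 ∨ (Even (i : ℕ) ∧ j = i + 5))

/-- The digraph `D(G, M)` on the color class `A`, obtained from `G` by
directing every edge from `A` to `B` and contracting every edge of `M`. -/
def DGM (G : SimpleGraph V) (A : Set V) (M : G.Subgraph) : A → A → Prop :=
  fun a a' => ∃ b, M.Adj (↑a' : V) b ∧ G.Adj (↑a : V) b

/-- A digraph is strongly `k`-connected if deleting fewer than `k` vertices
leaves it strongly connected. -/
def StronglyKConnected {α : Type*} (D : α → α → Prop) (k : ℕ) : Prop :=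
  ∀ S : Set α, S.ncard < k → ∀ u v : α, u ∉ S → v ∉ S →
    Relation.ReflTransGen (fun x y => D x y ∧ x ∉ S ∧ y ∉ S) u v

/-- The edge `u₁u₂` of the graph with vertex set `S` obtained from `G₁` is
reducing: deleting both ends destroys 1-extendability. -/
def ReducingIn (G₁ : SimpleGraph V) (S : Set V) (u₁ u₂ : V) : Prop :=
  G₁.Adj u₁ u₂ ∧
    ¬ OneExtendableOn (restrictG G₁ (({u₁, u₂} : Set V)ᶜ)) (S \ {u₁, u₂})

/-- `G` (bipartite with bipartition `(A, B)`) is a 2-sum of `G₁` (with vertex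
set `V₁`) and `G₂` (with vertex set `V₂`) along the edge `u₁u₂`. -/
def IsTwoSum (G : SimpleGraph V) (A B : Set V) (u₁ u₂ : V)
    (G₁ G₂ : SimpleGraph V) (V₁ V₂ : Set V) : Prop :=
  u₁ ∈ A ∧ u₂ ∈ B ∧ G.Adj u₁ u₂ ∧
  ∃ X : Set V, X.Nonempty ∧ X ⊆ A \ {u₁} ∧ X ≠ A \ {u₁} ∧
    (nbdSet G X \ {u₂}).ncard = X.ncard ∧
    V₂ = ((X ∪ (nbdSet G X \ {u₂}))ᶜ : Set V) ∧
    V₁ = X ∪ (nbdSet G X \ {u₂}) ∪ {u₁, u₂} ∧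
    (∀ x y, G₁.Adj x y ↔ ((G.Adj x y ∧ x ∈ V₁ ∧ y ∈ V₁) ∨
      (x = u₁ ∧ y ∈ {w | w ∈ nbdSet G X \ {u₂} ∧ ¬ G.Adj u₁ w ∧ ∃ z, z ∉ V₁ ∧ G.Adj w z}) ∨
      (y = u₁ ∧ x ∈ {w | w ∈ nbdSet G X \ {u₂} ∧ ¬ G.Adj u₁ w ∧ ∃ z, z ∉ V₁ ∧ G.Adj w z}))) ∧
    (∀ x y, G₂.Adj x y ↔ ((G.Adj x y ∧ x ∈ V₂ ∧ y ∈ V₂) ∨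
      (x = u₂ ∧ y ∈ {w | w ∈ (A \ X) \ {u₁} ∧ ¬ G.Adj u₂ w ∧ ∃ z, z ∉ V₂ ∧ G.Adj w z}) ∨
      (y = u₂ ∧ x ∈ {w | w ∈ (A \ X) \ {u₁} ∧ ¬ G.Adj u₂ w ∧ ∃ z, z ∉ V₂ ∧ G.Adj w z})))

/-- A trisector: a set of four vertices whose deletion leaves at least three
connected components. -/
def IsTrisector (G : SimpleGraph V) (X : Set V) : Prop :=
  X.ncard = 4 ∧ 3 ≤ Nat.card (G.induce (Xᶜ : Set V)).ConnectedComponent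

/-!
Split `X` into `X ∩ A` and `X ∩ B`. If `X ∩ A` is nonempty, the vertex `b ∈ B` outside
`X ∪ N(X)` is not a neighbour of `X ∩ A`, so the Hall-type inequality for braces gives
`|N(X ∩ A)| ≥ |X ∩ A| + 2`, while `N(X ∩ A) ⊆ (X ∩ B) ∪ (N(X) ∩ B)`; symmetrically for `X ∩ B`.
If both parts are nonempty, adding the two inequalities gives `|N(X)| ≥ 4`; if only one is,
it gives `|X| + 2 ≤ |N(X)| ≤ 3`.

The Hall-type inequality `|N(S)| ≥ |S| + 2` for nonempty `S ⊆ A` with `N(S) ≠ B` comes from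
perfect matchings through chosen edges leaving `N(S)`. A perfect matching matches `S` into
`N(S)`, minus the ends in `N(S)` of its edges leaving `S ∪ N(S)`. By connectivity some edge
leaves `N(S)`, so `|N(S)| > |S|`. If `|N(S)| = |S| + 1`, no two edges leaving `N(S)` are
disjoint, so they all pass through one vertex; then either a suitable perfect matching
matches `N(S)` into `S`, or adding that vertex to `S` creates no new neighbour, and both
contradict `|N(S)| > |S|`.
-/

lemma exists_disjoint_pair_or_eq_left_or_eq_right {α β : Type*} {E : α → β → Prop} {a : α}
    {b : β} (h : E a b) :
    (∃ a₁ b₁ a₂ b₂, E a₁ b₁ ∧ E a₂ b₂ ∧ a₁ ≠ a₂ ∧ b₁ ≠ b₂) ∨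
      (∀ x y, E x y → x = a) ∨ (∀ x y, E x y → y = b) := by
  by_contra! ⟨hpair, ⟨_, _, hxy, hxa⟩, ⟨_, _, hxy', hy'b⟩⟩
  grind

lemma KExtendable.mono {G : SimpleGraph V} {k l : ℕ} (h : KExtendable G l) (hkl : k ≤ l) :
    KExtendable G k :=
  fun M hM hcard => h M hM (hcard.trans hkl)

lemma KExtendable.exists_isPerfectMatching_adj {G : SimpleGraph V} (h : KExtendable G 1)
    {u v : V} (huv : G.Adj u v) : ∃ P : G.Subgraph, P.IsPerfectMatching ∧ P.Adj u v := by
  obtain ⟨P, hle, hP⟩ := h (G.subgraphOfAdj huv) (.subgraphOfAdj huv) (by simp)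
  exact ⟨P, hP, hle.2 (by simp)⟩

lemma KExtendable.exists_isPerfectMatching_adj_adj {G : SimpleGraph V} (h : KExtendable G 2)
    {u₁ v₁ u₂ v₂ : V} (h₁ : G.Adj u₁ v₁) (h₂ : G.Adj u₂ v₂)
    (hd : Disjoint ({u₁, v₁} : Set V) {u₂, v₂}) :
    ∃ P : G.Subgraph, P.IsPerfectMatching ∧ P.Adj u₁ v₁ ∧ P.Adj u₂ v₂ := by
  have hM := (Subgraph.IsMatching.subgraphOfAdj h₁).sup (.subgraphOfAdj h₂) <| by
    rwa [(Subgraph.IsMatching.subgraphOfAdj h₁).support_eq_verts,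
      (Subgraph.IsMatching.subgraphOfAdj h₂).support_eq_verts, subgraphOfAdj_verts,
      subgraphOfAdj_verts]
  obtain ⟨P, hle, hP⟩ := h _ hM <| by
    rw [Subgraph.edgeSet_sup, edgeSet_subgraphOfAdj, edgeSet_subgraphOfAdj]
    exact (Set.ncard_union_le _ _).trans (by simp)
  exact ⟨P, hP, hle.2 (.inl (by simp)), hle.2 (.inr (by simp))⟩

namespace SimpleGraph

lemma Subgraph.IsPerfectMatching.ncard_le_of_forall_adj_mem [Finite V] {G : SimpleGraph V}
    {P : G.Subgraph} (hP : P.IsPerfectMatching) {S F : Set V}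
    (hF : ∀ s ∈ S, ∀ w, P.Adj s w → w ∈ F) : S.ncard ≤ F.ncard := by
  choose f hf using fun v => (Subgraph.isPerfectMatching_iff.mp hP v).exists
  exact Set.ncard_le_ncard_of_injOn f (fun s hs => hF s hs _ (hf s))
    fun x _ y _ hxy => hP.1.eq_of_adj_right (hf x) (hxy ▸ hf y)

lemma Connected.exists_adj_nbdSet {G : SimpleGraph V} (hG : G.Connected) {S : Set V}
    (hS : S.Nonempty) {b : V} (hb : b ∉ S ∪ nbdSet G S) :
    ∃ a n, G.Adj a n ∧ a ∉ S ∪ nbdSet G S ∧ n ∈ nbdSet G S := by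
  obtain ⟨s, hs⟩ := hS
  obtain ⟨d, -, hd, hd'⟩ := (hG s b).some.exists_boundary_dart _ (Or.inl hs) hb
  refine ⟨d.snd, d.fst, d.adj.symm, hd', hd.resolve_left fun h => hd' ?_⟩
  exact .inr ⟨fun h' => hd' (.inl h'), d.fst, h, d.adj⟩

end SimpleGraph

namespace IsBipartition

variable {G : SimpleGraph V} {A B S : Set V}

lemma symm (h : IsBipartition G A B) : IsBipartition G B A :=
  ⟨h.1.symm, Set.union_comm A B ▸ h.2.1, fun _ _ huv => (h.2.2 huv).symm⟩

lemma notMem_right (h : IsBipartition G A B) {u : V} (hu : u ∈ A) : u ∉ B :=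
  Set.disjoint_left.mp h.1 hu

lemma mem_right_of_adj (h : IsBipartition G A B) {u v : V} (hu : u ∈ A) (huv : G.Adj u v) :
    v ∈ B :=
  ((h.2.2 huv).resolve_right fun hu' => h.notMem_right hu hu'.1).2

lemma nbdSet_subset_right (h : IsBipartition G A B) (hS : S ⊆ A) :
    nbdSet G S ⊆ B := fun _ ⟨_, _, hx, hxv⟩ => h.mem_right_of_adj (hS hx) hxv

section Finite

variable [Finite V]

lemma ncard_inter_add_ncard_inter (h : IsBipartition G A B) (X : Set V) :
    (X ∩ A).ncard + (X ∩ B).ncard = X.ncard := by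
  rw [← Set.ncard_union_eq (h.1.mono Set.inter_subset_right Set.inter_subset_right),
    ← Set.inter_union_distrib_left, h.2.1, Set.inter_univ]

lemma ncard_add_ncard_le_ncard_nbdSet (h : IsBipartition G A B) (hSA : S ⊆ A)
    {P : G.Subgraph} (hP : P.IsPerfectMatching) {T : Set V} (hT : T ⊆ nbdSet G S)
    (hTS : ∀ s ∈ S, ∀ t ∈ T, ¬ P.Adj s t) : S.ncard + T.ncard ≤ (nbdSet G S).ncard := by
  have hS : S.ncard ≤ (nbdSet G S \ T).ncard := by
    refine hP.ncard_le_of_forall_adj_mem fun s hs w hsw => ⟨⟨?_, s, hs, P.adj_sub hsw⟩, ?_⟩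
    · exact fun hw => h.notMem_right (hSA hw) (h.mem_right_of_adj (hSA hs) (P.adj_sub hsw))
    · exact fun hw => hTS s hs w hw hsw
  rw [Set.ncard_sdiff hT] at hS
  have := Set.ncard_le_ncard hT
  omega

lemma ncard_lt_ncard_nbdSet (h : IsBipartition G A B) (hext : KExtendable G 1)
    (hconn : G.Connected) (hSA : S ⊆ A) (hS : S.Nonempty) {b : V} (hb : b ∉ S ∪ nbdSet G S) :
    S.ncard < (nbdSet G S).ncard := by
  obtain ⟨a, n, han, ha, hn⟩ := hconn.exists_adj_nbdSet hS hb
  obtain ⟨P, hP, hPan⟩ := hext.exists_isPerfectMatching_adj han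
  have := h.ncard_add_ncard_le_ncard_nbdSet hSA hP (Set.singleton_subset_iff.mpr hn)
    fun s hs t ht hst => ha (.inl (hP.1.eq_of_adj_right hPan (ht ▸ hst) ▸ hs))
  rw [Set.ncard_singleton] at this
  omega

lemma exists_adj_nbdSet_of_ncard_lt (h : IsBipartition G A B) (hSA : S ⊆ A)
    (hlt : S.ncard < (nbdSet G S).ncard) {P : G.Subgraph} (hP : P.IsPerfectMatching) :
    ∃ a n, P.Adj a n ∧ a ∉ S ∪ nbdSet G S ∧ n ∈ nbdSet G S := by
  by_contra! hP'
  suffices (nbdSet G S).ncard ≤ S.ncard by omega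
  refine hP.ncard_le_of_forall_adj_mem fun n hn w hnw => by_contra fun hw => ?_
  have hwA : w ∈ A := h.symm.mem_right_of_adj (h.nbdSet_subset_right hSA hn) (P.adj_sub hnw)
  exact hP' w n hnw.symm (fun hw' => hw'.elim hw fun hwN =>
    h.notMem_right hwA (h.nbdSet_subset_right hSA hwN)) hn

lemma ncard_add_two_le_of_adj_adj (h : IsBipartition G A B) (hext : KExtendable G 2)
    (hSA : S ⊆ A) {a₁ n₁ a₂ n₂ : V} (h₁ : G.Adj a₁ n₁) (h₂ : G.Adj a₂ n₂)
    (ha₁ : a₁ ∉ S ∪ nbdSet G S) (ha₂ : a₂ ∉ S ∪ nbdSet G S)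
    (hn₁ : n₁ ∈ nbdSet G S) (hn₂ : n₂ ∈ nbdSet G S) (ha₁₂ : a₁ ≠ a₂) (hn₁₂ : n₁ ≠ n₂) :
    S.ncard + 2 ≤ (nbdSet G S).ncard := by
  have hNB := h.nbdSet_subset_right hSA
  have hA₁ : a₁ ∈ A := h.symm.mem_right_of_adj (hNB hn₁) h₁.symm
  have hA₂ : a₂ ∈ A := h.symm.mem_right_of_adj (hNB hn₂) h₂.symm
  have hd : Disjoint ({a₁, n₁} : Set V) {a₂, n₂} := by
    simp only [Set.disjoint_insert_left, Set.disjoint_singleton_left, Set.mem_insert_iff,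
      Set.mem_singleton_iff, not_or]
    exact ⟨⟨ha₁₂, fun h' => h.notMem_right hA₁ (h' ▸ hNB hn₂)⟩,
      fun h' => h.notMem_right hA₂ (h' ▸ hNB hn₁), hn₁₂⟩
  obtain ⟨P, hP, hP₁, hP₂⟩ := hext.exists_isPerfectMatching_adj_adj h₁ h₂ hd
  have := h.ncard_add_ncard_le_ncard_nbdSet hSA hP (T := {n₁, n₂})
    (Set.insert_subset hn₁ (Set.singleton_subset_iff.mpr hn₂)) ?_
  · rwa [Set.ncard_pair hn₁₂] at this
  rintro s hs t (rfl | rfl) hst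
  · exact ha₁ (.inl (hP.1.eq_of_adj_right hst hP₁ ▸ hs))
  · exact ha₂ (.inl (hP.1.eq_of_adj_right hst hP₂ ▸ hs))

theorem ncard_add_two_le_ncard_nbdSet (h : IsBipartition G A B) (hext : KExtendable G 2)
    (hconn : G.Connected) (hSA : S ⊆ A) (hS : S.Nonempty) {b : V} (hbB : b ∈ B)
    (hbN : b ∉ nbdSet G S) : S.ncard + 2 ≤ (nbdSet G S).ncard := by
  set N := nbdSet G S
  have hNB : N ⊆ B := h.nbdSet_subset_right hSA
  have hb : b ∉ S ∪ N := fun hb => hb.elim (fun hbS => h.notMem_right (hSA hbS) hbB) hbN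
  have hlt : S.ncard < N.ncard := h.ncard_lt_ncard_nbdSet (hext.mono one_le_two) hconn hSA hS hb
  by_contra! hcard
  obtain ⟨a, n, han, ha, hn⟩ := hconn.exists_adj_nbdSet hS hb
  have haA : a ∈ A := h.symm.mem_right_of_adj (hNB hn) han.symm
  rcases exists_disjoint_pair_or_eq_left_or_eq_right
      (E := fun x y => G.Adj x y ∧ x ∉ S ∪ N ∧ y ∈ N) ⟨han, ha, hn⟩ with
    ⟨a₁, n₁, a₂, n₂, ⟨h₁, ha₁, hn₁⟩, ⟨h₂, ha₂, hn₂⟩, ha₁₂, hn₁₂⟩ | hstar | hstar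
  · exact hcard.not_ge <| h.ncard_add_two_le_of_adj_adj hext hSA h₁ h₂ ha₁ ha₂ hn₁ hn₂ ha₁₂ hn₁₂
  · by_cases hout : ∀ t, G.Adj a t → t ∈ N
    · have hsub : nbdSet G (insert a S) ⊆ N := by
        rintro v ⟨hv, x, rfl | hx, hxv⟩
        · exact hout v hxv
        · exact ⟨fun hvS => hv (.inr hvS), x, hx, hxv⟩
      have := h.ncard_lt_ncard_nbdSet (hext.mono one_le_two) hconn (Set.insert_subset haA hSA)
        (Set.insert_nonempty a S) (b := b) (fun hb' => ?_)
      · rw [Set.ncard_insert_of_notMem (fun haS => ha (.inl haS))] at this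
        have := Set.ncard_le_ncard hsub
        omega
      rcases hb' with (rfl | hbS) | hbN'
      · exact h.notMem_right haA hbB
      · exact hb (.inl hbS)
      · exact hb (.inr (hsub hbN'))
    · push Not at hout
      obtain ⟨t, hat, ht⟩ := hout
      obtain ⟨P, hP, hPat⟩ := hext.mono one_le_two |>.exists_isPerfectMatching_adj hat
      obtain ⟨x, m, hPxm, hx, hm⟩ := h.exists_adj_nbdSet_of_ncard_lt hSA hlt hP
      obtain rfl : x = a := hstar x m ⟨P.adj_sub hPxm, hx, hm⟩
      exact ht (hP.1.eq_of_adj_left hPxm hPat ▸ hm)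
  · obtain ⟨-, s, hs, hsn⟩ := hn
    obtain ⟨P, hP, hPsn⟩ := hext.mono one_le_two |>.exists_isPerfectMatching_adj hsn
    obtain ⟨x, m, hPxm, hx, hm⟩ := h.exists_adj_nbdSet_of_ncard_lt hSA hlt hP
    obtain rfl : m = n := hstar x m ⟨P.adj_sub hPxm, hx, hm⟩
    exact hx (.inl (hP.1.eq_of_adj_right hPxm hPsn ▸ hs))

lemma ncard_inter_add_two_le (h : IsBipartition G A B) (hext : KExtendable G 2)
    (hconn : G.Connected) {X : Set V} (hX : (X ∩ A).Nonempty) {b : V} (hbB : b ∈ B)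
    (hbX : b ∉ X) (hbN : b ∉ nbdSet G X) :
    (X ∩ A).ncard + 2 ≤ (X ∩ B).ncard + (nbdSet G X ∩ B).ncard := by
  have hsub : nbdSet G (X ∩ A) ⊆ X ∩ B ∪ nbdSet G X ∩ B := by
    rintro v ⟨-, x, hx, hxv⟩
    have hvB := h.mem_right_of_adj hx.2 hxv
    by_cases hvX : v ∈ X
    · exact .inl ⟨hvX, hvB⟩
    · exact .inr ⟨⟨hvX, x, hx.1, hxv⟩, hvB⟩
  have hbN' : b ∉ nbdSet G (X ∩ A) := fun hb => (hsub hb).elim (hbX ·.1) (hbN ·.1)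
  calc (X ∩ A).ncard + 2
      ≤ (nbdSet G (X ∩ A)).ncard :=
        h.ncard_add_two_le_ncard_nbdSet hext hconn Set.inter_subset_right hX hbB hbN'
    _ ≤ (X ∩ B ∪ nbdSet G X ∩ B).ncard := Set.ncard_le_ncard hsub
    _ ≤ (X ∩ B).ncard + (nbdSet G X ∩ B).ncard := Set.ncard_union_le _ _

end Finite

end IsBipartition

/-- In a connected brace, a vertex set with at most three outside neighbors
whose removal (together with its neighborhood) leaves vertices of both color
classes has at most one element. -/
theorem small_nbd_singleton [Fintype V] (G : SimpleGraph V) (A B : Set V)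
    (hbip : IsBipartition G A B) (hext : KExtendable G 2) (hconn : G.Connected)
    (X : Set V) (hN : (nbdSet G X).ncard ≤ 3)
    (hA : (((Set.univ \ X) \ nbdSet G X) ∩ A).Nonempty)
    (hB : (((Set.univ \ X) \ nbdSet G X) ∩ B).Nonempty) :
    X.ncard ≤ 1 := by
  obtain ⟨a, ⟨⟨-, haX⟩, haN⟩, haA⟩ := hA
  obtain ⟨b, ⟨⟨-, hbX⟩, hbN⟩, hbB⟩ := hB
  have hXA : (X ∩ A).ncard = 0 ∨ (X ∩ A).ncard + 2 ≤ (X ∩ B).ncard + (nbdSet G X ∩ B).ncard :=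
    (Nat.eq_zero_or_pos _).imp_right fun hpos =>
      hbip.ncard_inter_add_two_le hext hconn (Set.nonempty_of_ncard_ne_zero hpos.ne') hbB hbX hbN
  have hXB : (X ∩ B).ncard = 0 ∨ (X ∩ B).ncard + 2 ≤ (X ∩ A).ncard + (nbdSet G X ∩ A).ncard :=
    (Nat.eq_zero_or_pos _).imp_right fun hpos => hbip.symm.ncard_inter_add_two_le hext hconn
      (Set.nonempty_of_ncard_ne_zero hpos.ne') haA haX haN
  have hX := hbip.ncard_inter_add_ncard_inter X
  have hNX := hbip.ncard_inter_add_ncard_inter (nbdSet G X)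
  omega
end

section
/- Let G be a connected bipartite graph, M a perfect matching of G, and k ≥ 1 an integer. Then G is k-extendable if and only if the digraph D(G,M) is strongly k-connected. -/
open SimpleGraph

universe u v

variable {V : Type u} {W : Type v}

/-!
Write `m v` for the `M`-mate of `v`. Then `a → a'` in `D(G, M)` iff `a` is adjacent to `m a'`, and
`D` has a loop at every vertex. A finite digraph is strongly `k`-connected iff every nonempty `X`
such that `X` and its out-neighbours are not everything has at least `k` out-neighbours outside `X`;
for `D(G, M)` this is the Hall-type condition `|N(X)| ≥ |X| + k` for nonempty `X ⊆ A` with `N(X) ≠ B`.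

Given this condition and a matching `F` with at most `k` edges, Hall's theorem matches the
uncovered part of `A` into the uncovered part of `B`. Conversely, let `G` be `k`-extendable and
suppose `Y`, the set of out-neighbours of `X` outside `X`, has fewer than `k` vertices. Since `G` is
connected and 1-extendable, `D` is strongly connected, so some `a ∉ X ∪ Y` reaches `X` by a walk
running through `Y`. Shifting `M` along that walk gives a matching of size `|Y| + 1 ≤ k` that
covers `m(Y)` and one vertex of `m(X)` from outside `X`; it does not extend, since `X` would then
have to be matched into fewer than `|X|` vertices.
-/

open Function Set Relation

section Digraph

variable {α : Type*} {D : α → α → Prop} {k : ℕ}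

def outNbhd {β : Type*} (D : α → β → Prop) (X : Set α) : Set β :=
  {y | ∃ x ∈ X, D x y}

def KOutExpanding (D : α → α → Prop) (k : ℕ) : Prop :=
  ∀ X : Set α, X.Nonempty → (X ∪ outNbhd D X)ᶜ.Nonempty → k ≤ (outNbhd D X \ X).ncard

theorem stronglyKConnected_iff_kOutExpanding [Finite α] :
    StronglyKConnected D k ↔ KOutExpanding D k := by
  constructor
  · intro h X ⟨u, hu⟩ ⟨v, hv⟩
    by_contra! hlt
    have hclosed : ∀ w, ReflTransGen (fun x y => D x y ∧ x ∉ outNbhd D X \ X ∧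
        y ∉ outNbhd D X \ X) u w → w ∈ X := by
      intro w hw
      induction hw with
      | refl => exact hu
      | tail _ hst ih => exact not_not.1 fun hw => hst.2.2 ⟨⟨_, ih, hst.1⟩, hw⟩
    exact hv (.inl (hclosed v (h _ hlt u v (fun h' => h'.2 hu) (fun h' => hv (.inr h'.1)))))
  · intro h S hS u v hu hv
    by_contra huv
    set R := {w | ReflTransGen (fun x y => D x y ∧ x ∉ S ∧ y ∉ S) u w}
    have hRS : ∀ w ∈ R, w ∉ S := fun w hw => by
      rcases hw.cases_tail with rfl | ⟨_, -, hst⟩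
      exacts [hu, hst.2.2]
    have hsub : outNbhd D R \ R ⊆ S := by
      rintro y ⟨⟨x, hx, hxy⟩, hy⟩
      exact not_not.1 fun hyS => hy (ReflTransGen.tail hx ⟨hxy, hRS x hx, hyS⟩)
    have hv' : v ∈ (R ∪ outNbhd D R)ᶜ := by
      rintro (hvR | hvN)
      exacts [huv hvR, hv (hsub ⟨hvN, huv⟩)]
    have := (h R ⟨u, .refl⟩ ⟨v, hv'⟩).trans (ncard_le_ncard hsub)
    omega

theorem KOutExpanding.ncard_le_ncard_outNbhd_inter_compl [Finite α] (h : KOutExpanding D k)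
    (hD : ∀ a, D a a) {S T : Set α} (hTk : T.ncard ≤ k) (hTS : T.ncard ≤ S.ncard) {Z : Set α}
    (hZ : Z ⊆ Sᶜ) : Z.ncard ≤ (outNbhd D Z ∩ Tᶜ).ncard := by
  rcases Z.eq_empty_or_nonempty with rfl | hZne
  · simp
  have hZN : Z ⊆ outNbhd D Z := fun z hz => ⟨z, hz, hD z⟩
  have hNT : (outNbhd D Z).ncard - T.ncard ≤ (outNbhd D Z ∩ Tᶜ).ncard := by
    rw [← sdiff_eq]
    exact le_ncard_sdiff T _
  by_cases hc : (Z ∪ outNbhd D Z)ᶜ.Nonempty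
  · have := h Z hZne hc
    have := ncard_sdiff_add_ncard_of_subset hZN
    omega
  · rw [not_nonempty_iff_eq_empty, compl_empty_iff, union_eq_right.2 hZN] at hc
    rw [hc, univ_inter, ncard_compl T]
    have := ncard_compl S ▸ ncard_le_ncard hZ
    omega

end Digraph

theorem exists_injective_of_forall_ncard_le {α β : Type*} [Finite α] [Finite β] {S : Set α}
    {T : Set β} {r : α → β → Prop}
    (h : ∀ Z ⊆ S, Z.ncard ≤ (outNbhd r Z ∩ T).ncard) :
    ∃ f : S → T, Injective f ∧ ∀ z : S, r z (f z) := by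
  classical
  have := Fintype.ofFinite T
  refine (Fintype.all_card_le_filter_rel_iff_exists_injective (fun (z : S) (y : T) => r z y)).1
    fun Z => ?_
  calc Z.card = (Subtype.val '' (Z : Set S)).ncard := by
        rw [ncard_image_of_injective _ Subtype.val_injective, ncard_coe_finset]
    _ ≤ (outNbhd r (Subtype.val '' (Z : Set S)) ∩ T).ncard :=
        h _ (by rintro _ ⟨z, -, rfl⟩; exact z.2)
    _ = (Subtype.val '' ((Finset.univ.filter fun y : T => ∃ z ∈ Z, r z y : Finset T) :
          Set T)).ncard := by
        congr 1
        ext y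
        simp [outNbhd]
    _ = _ := by rw [ncard_image_of_injective _ Subtype.val_injective, ncard_coe_finset]

section ReachesThrough

variable {α : Type*} {r : α → α → Prop} {X Y : Set α} {a : α}

inductive ReachesThrough (r : α → α → Prop) (X Y : Set α) : α → Prop
  | edge {a x : α} : r a x → x ∈ X → ReachesThrough r X Y a
  | cons {a y : α} : r a y → y ∈ Y → ReachesThrough r X Y y → ReachesThrough r X Y a

theorem exists_reachesThrough_of_reflTransGen {x : α} (h : ReflTransGen r a x) (hx : x ∈ X)
    (ha : a ∉ X ∪ Y) : ∃ a' ∉ X ∪ Y, ReachesThrough r X Y a' := by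
  by_contra! hno
  have key : ∀ c, ReflTransGen r c x → c ∈ X ∨ ReachesThrough r X Y c := by
    intro c hc
    induction hc using ReflTransGen.head_induction_on with
    | refl => exact .inl hx
    | @head c d hcd _ ih =>
      refine .inr ?_
      by_cases hdX : d ∈ X
      · exact .edge hcd hdX
      by_cases hdY : d ∈ Y
      · exact .cons hcd hdY (ih.resolve_left hdX)
      · exact absurd (ih.resolve_left hdX) (hno d (by simp [hdX, hdY]))
  rcases key a h with haX | hra
  exacts [ha (.inl haX), hno a ha hra]

theorem ReachesThrough.or_diff_singleton (b : α) (h : ReachesThrough r X Y a) :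
    ReachesThrough r X (Y \ {b}) a ∨ ReachesThrough r X (Y \ {b}) b := by
  induction h with
  | edge hax hx => exact .inl (.edge hax hx)
  | @cons a y hay hy _ ih =>
    refine ih.elim (fun ih => ?_) .inr
    by_cases hyb : y = b
    · exact .inr (hyb ▸ ih)
    · exact .inl (.cons hay ⟨hy, hyb⟩ ih)

theorem exists_injOn_insert {β : Type*} {τ : α → β} {s : Set α} {b : β} (ha : a ∉ s)
    (hτ : InjOn τ s) (hb : b ∉ τ '' s) :
    ∃ σ : α → β, InjOn σ (insert a s) ∧ σ a = b ∧ EqOn σ τ s := by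
  classical
  have heq : EqOn (update τ a b) τ s := fun u hu => update_of_ne (ne_of_mem_of_not_mem hu ha) ..
  refine ⟨update τ a b, (injOn_insert ha).2 ⟨hτ.congr heq.symm, ?_⟩, update_self .., heq⟩
  rwa [update_self, heq.image_eq]

theorem ReachesThrough.exists_injOn (hY : Y.Finite) (hr : ∀ y ∈ Y, r y y) (hXY : Disjoint X Y)
    (ha : a ∉ Y) (h : ReachesThrough r X Y a) :
    ∃ σ : α → α, InjOn σ (insert a Y) ∧ MapsTo σ (insert a Y) (X ∪ Y) ∧
      ∀ u ∈ insert a Y, r u (σ u) := by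
  induction hn : Y.ncard using Nat.strong_induction_on generalizing Y a with
  | _ n ih =>
    cases h with
    | @edge _ x hax hx =>
      obtain ⟨σ, hσ, hσa, hσY⟩ := exists_injOn_insert ha (injOn_id Y)
        (b := x) (by simpa using hXY.notMem_of_mem_left hx)
      refine ⟨σ, hσ, forall_mem_insert.2 ⟨hσa ▸ .inl hx, fun u hu => hσY hu ▸ .inr hu⟩,
        forall_mem_insert.2 ⟨hσa ▸ hax, fun u hu => hσY hu ▸ hr u hu⟩⟩
    | @cons _ y hay hy hreach =>
      -- a walk from `y` can be cut at its last visit to `y`, so induction applies to `Y \ {y}`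
      obtain ⟨τ, hτ, hτmaps, hτr⟩ := ih _ (hn ▸ ncard_sdiff_singleton_lt_of_mem hy hY) hY.sdiff
        (fun z hz => hr z hz.1) (hXY.mono_right sdiff_subset) (by simp)
        ((hreach.or_diff_singleton y).elim id id) rfl
      rw [insert_sdiff_singleton, insert_eq_of_mem hy] at hτ hτmaps hτr
      have hyτ : y ∉ τ '' Y := by
        rintro ⟨u, hu, hτu⟩
        rcases hτmaps hu with h | h
        exacts [hXY.notMem_of_mem_right hy (hτu ▸ h), (hτu ▸ h).2 rfl]
      obtain ⟨σ, hσ, hσa, hσY⟩ := exists_injOn_insert ha hτ hyτ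
      refine ⟨σ, hσ, forall_mem_insert.2 ⟨hσa ▸ .inr hy, fun u hu => ?_⟩,
        forall_mem_insert.2 ⟨hσa ▸ hay, fun u hu => hσY hu ▸ hτr u hu⟩⟩
      rw [hσY hu]
      exact (hτmaps hu).imp_right (·.1)

end ReachesThrough

namespace SimpleGraph

variable {G : SimpleGraph V} {A : Set V}

theorem IsBipartiteWith.mem_iff_notMem_of_adj (hA : G.IsBipartiteWith A Aᶜ) {u v : V}
    (h : G.Adj u v) : v ∈ A ↔ u ∉ A :=
  ⟨fun hv hu => hA.mem_of_mem_adj hu h hv, fun hu => hA.symm.mem_of_mem_adj hu h⟩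

theorem exists_isMatching_of_injective {ι : Type*} [Finite ι] {p q : ι → V}
    (hp : Injective p) (hq : Injective q) (hpq : ∀ i j, p i ≠ q j)
    (hadj : ∀ i, G.Adj (p i) (q i)) :
    ∃ F : G.Subgraph, F.IsMatching ∧ F.verts = range p ∪ range q ∧
      (∀ i, F.Adj (p i) (q i)) ∧ F.edgeSet.ncard ≤ Nat.card ι := by
  refine ⟨⨆ i, G.subgraphOfAdj (hadj i), .iSup (fun i => .subgraphOfAdj _) fun i j hij => ?_,
    ?_, fun i => Subgraph.iSup_adj.2 ⟨i, by simp⟩, ?_⟩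
  · simp only [support_subgraphOfAdj, disjoint_insert_left, disjoint_insert_right,
      disjoint_singleton, mem_insert_iff, mem_singleton_iff, not_or]
    exact ⟨⟨(hij <| hp ·.symm), hpq j i⟩, hpq i j, (hij <| hq ·)⟩
  · ext v
    simp [Subgraph.verts_iSup, exists_or, eq_comm]
  · rw [Subgraph.edgeSet_iSup]
    simp only [edgeSet_subgraphOfAdj, iUnion_singleton_eq_range]
    exact (Nat.card_coe_set_eq _).symm.trans_le (Finite.card_range_le _)

end SimpleGraph

theorem IsBipartition.isBipartiteWith_compl {G : SimpleGraph V} {A B : Set V}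
    (h : IsBipartition G A B) : G.IsBipartiteWith A Aᶜ := by
  obtain ⟨hdisj, hcover, hadj⟩ := h
  obtain rfl : B = Aᶜ := (IsCompl.compl_eq ⟨hdisj, codisjoint_iff.2 hcover⟩).symm
  exact ⟨hdisj, hadj⟩

theorem SimpleGraph.Subgraph.IsPerfectMatching.exists_mate {G : SimpleGraph V} {M : G.Subgraph}
    (hM : M.IsPerfectMatching) : ∃ m : V → V, ∀ v w, M.Adj v w ↔ w = m v := by
  choose m hm using isPerfectMatching_iff.1 hM
  exact ⟨m, fun v w => ⟨(hm v).2 w, fun h => h ▸ (hm v).1⟩⟩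

namespace SimpleGraph.Subgraph.IsMatching

variable {G : SimpleGraph V} {A : Set V} {F : G.Subgraph} [Finite V]

theorem ncard_inter_eq_ncard_diff (hA : G.IsBipartiteWith A Aᶜ) (hF : F.IsMatching) :
    (F.verts ∩ A).ncard = (F.verts \ A).ncard := by
  choose! p hp using fun v (hv : v ∈ F.verts) => (hF hv).exists
  have hpF : ∀ v ∈ F.verts, p v ∈ F.verts := fun v hv => F.edge_vert (hp v hv).symm
  have hpA : ∀ v ∈ F.verts, p v ∈ A ↔ v ∉ A := fun v hv =>
    hA.mem_iff_notMem_of_adj (F.adj_sub (hp v hv))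
  have hinj : InjOn p F.verts := fun v hv w hw h => hF.eq_of_adj_right (hp v hv) (h ▸ hp w hw)
  exact le_antisymm
    (ncard_le_ncard_of_injOn p (fun v hv => ⟨hpF v hv.1, fun h => (hpA v hv.1).1 h hv.2⟩)
      (hinj.mono inter_subset_left))
    (ncard_le_ncard_of_injOn p (fun v hv => ⟨hpF v hv.1, (hpA v hv.1).2 hv.2⟩)
      (hinj.mono sdiff_subset))

theorem ncard_diff_le_ncard_edgeSet (hA : G.IsBipartiteWith A Aᶜ) (hF : F.IsMatching) :
    (F.verts \ A).ncard ≤ F.edgeSet.ncard := by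
  choose! p hp using fun v (hv : v ∈ F.verts) => (hF hv).exists
  refine ncard_le_ncard_of_injOn (fun v => s(v, p v)) (fun v hv => hp v hv.1) ?_
  intro v hv w hw h
  rcases Sym2.eq_iff.1 h with ⟨hvw, -⟩ | ⟨hvw, -⟩
  · exact hvw
  · exact absurd (hvw ▸ (hA.mem_iff_notMem_of_adj (F.adj_sub (hp w hw.1))).2 hw.2) hv.2

end SimpleGraph.Subgraph.IsMatching

section DGM

variable {G : SimpleGraph V} {A : Set V} {M : G.Subgraph} {m : V → V} {k : ℕ}

theorem adj_mate (hm : ∀ v w, M.Adj v w ↔ w = m v) (v : V) : G.Adj v (m v) :=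
  M.adj_sub ((hm v _).2 rfl)

theorem mate_mate (hm : ∀ v w, M.Adj v w ↔ w = m v) (v : V) : m (m v) = v :=
  ((hm (m v) v).1 ((hm v _).2 rfl).symm).symm

theorem mate_injective (hm : ∀ v w, M.Adj v w ↔ w = m v) : Injective m :=
  LeftInverse.injective (mate_mate hm)

theorem mate_mem_iff (hA : G.IsBipartiteWith A Aᶜ) (hm : ∀ v w, M.Adj v w ↔ w = m v) (v : V) :
    m v ∈ A ↔ v ∉ A :=
  hA.mem_iff_notMem_of_adj (adj_mate hm v)

theorem dgm_iff (hm : ∀ v w, M.Adj v w ↔ w = m v) {a a' : A} :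
    DGM G A M a a' ↔ G.Adj a (m a') := by
  simp [DGM, hm]

theorem dgm_refl (hm : ∀ v w, M.Adj v w ↔ w = m v) (a : A) : DGM G A M a a :=
  (dgm_iff hm).2 (adj_mate hm a)

theorem exists_isMatching_dgm (hA : G.IsBipartiteWith A Aᶜ) (hm : ∀ v w, M.Adj v w ↔ w = m v)
    {ι : Type*} [Finite ι] {p q : ι → A} (hp : Injective p) (hq : Injective q)
    (hD : ∀ i, DGM G A M (p i) (q i)) :
    ∃ F : G.Subgraph, F.IsMatching ∧
      F.verts = range (fun i => (p i : V)) ∪ range (fun i => m (q i)) ∧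
      (∀ i, F.Adj (p i) (m (q i))) ∧ F.edgeSet.ncard ≤ Nat.card ι :=
  exists_isMatching_of_injective (Subtype.val_injective.comp hp)
    ((mate_injective hm).comp (Subtype.val_injective.comp hq))
    (fun i j h => (mate_mem_iff hA hm _).1 (h ▸ (p i).2) (q j).2) (fun i => (dgm_iff hm).1 (hD i))

theorem ncard_setOf_mate_mem (hA : G.IsBipartiteWith A Aᶜ) (hm : ∀ v w, M.Adj v w ↔ w = m v)
    (S : Set V) : {a : A | m a ∈ S}.ncard = (S \ A).ncard := by
  rw [← ncard_image_of_injective _ ((mate_injective hm).comp Subtype.val_injective)]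
  congr 1
  ext v
  refine ⟨fun ⟨a, ha, hav⟩ => hav ▸ ⟨ha, fun h => (mate_mem_iff hA hm a).1 h a.2⟩, fun hv => ?_⟩
  exact ⟨⟨m v, (mate_mem_iff hA hm v).2 hv.2⟩, by simpa [mate_mate hm] using hv.1, mate_mate hm v⟩

theorem KExtendable.mono_s17 {j : ℕ} (h : KExtendable G k) (hjk : j ≤ k) : KExtendable G j :=
  fun F hF hFj => h F hF (hFj.trans hjk)

theorem KExtendable.ncard_le_of_injOn [Finite V] (hA : G.IsBipartiteWith A Aᶜ)
    (hm : ∀ v w, M.Adj v w ↔ w = m v) (hext : KExtendable G k) {X Y U : Set A} {σ : A → A}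
    (hXY : outNbhd (DGM G A M) X ⊆ X ∪ Y) (hUX : Disjoint U X) (hσ : InjOn σ U)
    (hσU : MapsTo σ U (X ∪ Y)) (hD : ∀ u ∈ U, DGM G A M u (σ u)) (hUk : U.ncard ≤ k) :
    U.ncard ≤ Y.ncard := by
  obtain ⟨F, hF, -, hFadj, hFk⟩ := exists_isMatching_dgm hA hm (ι := U) (p := Subtype.val)
    (q := fun u => σ u) Subtype.val_injective hσ.injective (fun u => hD u u.2)
  obtain ⟨P, hFP, hP⟩ := hext F hF (hFk.trans (by rwa [Nat.card_coe_set_eq]))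
  -- `F ≤ P` matches the mates of `σ '' U` to `U`, which is disjoint from `X`.
  have hmatched : ∀ x ∈ X, ∃ y ∈ (X ∪ Y) \ σ '' U, P.Adj x (m y) := by
    intro x hx
    obtain ⟨b, hxb, -⟩ := hP.1 (hP.2 x)
    have hb : m b ∈ A := (mate_mem_iff hA hm b).2
      ((hA.mem_iff_notMem_of_adj (P.adj_sub hxb)).not.2 (not_not.2 x.2))
    refine ⟨⟨m b, hb⟩, ⟨hXY ⟨x, hx, (dgm_iff hm).2 ?_⟩, ?_⟩, by simpa [mate_mate hm] using hxb⟩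
    · simpa [mate_mate hm] using P.adj_sub hxb
    · rintro ⟨u, hu, hσu⟩
      have hub : P.Adj u b := by
        have : P.Adj u (m (σ u)) := hFP.2 (hFadj ⟨u, hu⟩)
        rwa [hσu, mate_mate hm] at this
      exact hUX.notMem_of_mem_left hu (Subtype.val_injective (hP.1.eq_of_adj_right hub hxb) ▸ hx)
  choose! f hf hPf using hmatched
  have hfinj : InjOn f X := fun x hx x' hx' h =>
    Subtype.val_injective (hP.1.eq_of_adj_right (hPf x hx) (h ▸ hPf x' hx'))
  have hX := ncard_le_ncard_of_injOn f hf hfinj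
  have hσU' : (σ '' U).ncard ≤ (X ∪ Y).ncard := ncard_le_ncard hσU.image_subset
  rw [ncard_sdiff hσU.image_subset, hσ.ncard_image] at hX
  rw [hσ.ncard_image] at hσU'
  have := ncard_union_le X Y
  omega

theorem exists_dgm_into_of_connected (hA : G.IsBipartiteWith A Aᶜ)
    (hm : ∀ v w, M.Adj v w ↔ w = m v) (hconn : G.Connected) {X : Set A} {x₀ a₀ : A}
    (hx₀ : x₀ ∈ X) (ha₀ : a₀ ∉ X) (hX : outNbhd (DGM G A M) X ⊆ X) :
    ∃ a ∉ X, ∃ x ∈ X, DGM G A M a x := by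
  -- `X` is closed, so an edge leaving `X ∪ m(X)` runs from `m(X)` into `A \ X`.
  set W : Set V := {v | ∃ x ∈ X, v = x ∨ v = m x}
  have ha₀W : (a₀ : V) ∉ W := by
    rintro ⟨x, hx, h | h⟩
    · exact ha₀ (Subtype.val_injective h ▸ hx)
    · exact (mate_mem_iff hA hm x).1 (h ▸ a₀.2) x.2
  obtain ⟨d, -, ⟨x, hx, hdx | hdx⟩, hdW⟩ :=
    (hconn.preconnected x₀ a₀).some.exists_boundary_dart W ⟨x₀, hx₀, .inl rfl⟩ ha₀W
  · have hA' : m d.snd ∈ A := (mate_mem_iff hA hm _).2 fun h =>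
      (hA.mem_iff_notMem_of_adj d.adj).1 h (hdx ▸ x.2)
    refine absurd ⟨⟨m d.snd, hA'⟩, hX ⟨x, hx, (dgm_iff hm).2 ?_⟩, .inr (mate_mate hm _).symm⟩ hdW
    rw [mate_mate hm, ← hdx]
    exact d.adj
  · have hdA : d.snd ∈ A := (hA.mem_iff_notMem_of_adj d.adj).2 fun h =>
      (mate_mem_iff hA hm x).1 (hdx ▸ h) x.2
    exact ⟨⟨d.snd, hdA⟩, fun h => hdW ⟨_, h, .inl rfl⟩, x, hx, (dgm_iff hm).2 (hdx ▸ d.adj.symm)⟩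

theorem reflTransGen_dgm_of_connected [Finite V] (hA : G.IsBipartiteWith A Aᶜ)
    (hm : ∀ v w, M.Adj v w ↔ w = m v) (hconn : G.Connected) (h1 : KExtendable G 1) (a a' : A) :
    ReflTransGen (DGM G A M) a a' := by
  by_contra h
  obtain ⟨c, hc, x, hx, hcx⟩ := exists_dgm_into_of_connected hA hm hconn
    (X := {c | ReflTransGen (DGM G A M) a c}) .refl h fun y ⟨z, hz, hzy⟩ => hz.tail hzy
  have := h1.ncard_le_of_injOn hA hm (Y := ∅) (U := {c}) (σ := fun _ => x)
    (fun y ⟨z, hz, hzy⟩ => .inl (hz.tail hzy)) (disjoint_singleton_left.2 hc) (injOn_singleton _ _)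
    (mapsTo_singleton.2 (.inl hx)) (by simpa using hcx) (by simp)
  simp at this

theorem kOutExpanding_dgm_of_kExtendable [Finite V] (hA : G.IsBipartiteWith A Aᶜ)
    (hm : ∀ v w, M.Adj v w ↔ w = m v) (hconn : G.Connected) (hext : KExtendable G k) :
    KOutExpanding (DGM G A M) k := by
  obtain rfl | hk := Nat.eq_zero_or_pos k
  · exact fun _ _ _ => Nat.zero_le _
  intro X ⟨x, hx⟩ ⟨v, hv⟩
  by_contra! hlt
  set Y := outNbhd (DGM G A M) X \ X
  obtain ⟨a, ha, hreach⟩ := exists_reachesThrough_of_reflTransGen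
    (reflTransGen_dgm_of_connected hA hm hconn (hext.mono_s17 hk) v x) hx (Y := Y)
    fun h => hv (h.imp id (·.1))
  have haY : a ∉ Y := fun h => ha (.inr h)
  obtain ⟨σ, hσ, hσmaps, hσD⟩ :=
    hreach.exists_injOn (toFinite Y) (fun y _ => dgm_refl hm y) disjoint_sdiff_right haY
  have hcard : (insert a Y).ncard = Y.ncard + 1 := ncard_insert_of_notMem haY
  have := hext.ncard_le_of_injOn hA hm (X := X) (Y := Y) (U := insert a Y)
    (fun y hy => or_iff_not_imp_left.2 (⟨hy, ·⟩))
    (disjoint_insert_left.2 ⟨fun h => ha (.inl h), disjoint_sdiff_left⟩) hσ hσmaps hσD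
    (by omega)
  omega

theorem kExtendable_of_kOutExpanding_dgm [Finite V] (hA : G.IsBipartiteWith A Aᶜ)
    (hm : ∀ v w, M.Adj v w ↔ w = m v) (h : KOutExpanding (DGM G A M) k) : KExtendable G k := by
  intro F₀ hF₀ hk
  set SA : Set A := {a | (a : V) ∈ F₀.verts}
  set SB : Set A := {a | m a ∈ F₀.verts}
  have hSAB : SA.ncard = SB.ncard := by
    rw [ncard_subtype, ncard_setOf_mate_mem hA hm]
    exact hF₀.ncard_inter_eq_ncard_diff hA
  have hSBk : SB.ncard ≤ k :=
    (ncard_setOf_mate_mem hA hm _).trans_le ((hF₀.ncard_diff_le_ncard_edgeSet hA).trans hk)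
  -- Hall: `A \ V(F₀)` is matched along `D` to the mates of `B \ V(F₀)`.
  obtain ⟨f, hf, hfD⟩ := exists_injective_of_forall_ncard_le (S := SAᶜ) (T := SBᶜ)
    fun _ => h.ncard_le_ncard_outNbhd_inter_compl (dgm_refl hm) hSBk hSAB.ge
  have hfsurj : Surjective f := (hf.bijective_of_nat_card_le (by
    rw [Nat.card_coe_set_eq, Nat.card_coe_set_eq, ncard_compl SA, ncard_compl SB, hSAB])).2
  obtain ⟨Q, hQ, hQverts, -, -⟩ := exists_isMatching_dgm hA hm (p := fun z : ↥SAᶜ => (z : A))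
    (q := fun z => (f z : A)) Subtype.val_injective (Subtype.val_injective.comp hf) hfD
  refine ⟨F₀ ⊔ Q, le_sup_left, hF₀.sup hQ ?_, fun v => ?_⟩
  · rw [hF₀.support_eq_verts, hQ.support_eq_verts, hQverts, disjoint_union_right]
    exact ⟨disjoint_right.2 fun _ ⟨z, hz⟩ => hz ▸ z.2,
      disjoint_right.2 fun _ ⟨z, hz⟩ => hz ▸ (f z).2⟩
  rw [Subgraph.verts_sup, hQverts]
  by_cases hv : v ∈ F₀.verts
  · exact .inl hv
  by_cases hvA : v ∈ A
  · exact .inr (.inl ⟨⟨⟨v, hvA⟩, hv⟩, rfl⟩)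
  · obtain ⟨z, hz⟩ := hfsurj ⟨⟨m v, (mate_mem_iff hA hm v).2 hvA⟩, by simpa [SB, mate_mate hm]⟩
    exact .inr (.inr ⟨z, by simp [hz, mate_mate hm]⟩)

end DGM

theorem kExtendable_iff_stronglyConnected_general [Fintype V] (G : SimpleGraph V)
    (A B : Set V) (hbip : IsBipartition G A B) (hconn : G.Connected)
    (M : G.Subgraph) (hM : M.IsPerfectMatching) (k : ℕ) :
    KExtendable G k ↔ StronglyKConnected (DGM G A M) k := by
  have hA := hbip.isBipartiteWith_compl
  obtain ⟨m, hm⟩ := hM.exists_mate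
  rw [stronglyKConnected_iff_kOutExpanding]
  exact ⟨kOutExpanding_dgm_of_kExtendable hA hm hconn, kExtendable_of_kOutExpanding_dgm hA hm⟩

/-- `G` is `k`-extendable if and only if `D(G, M)` is strongly `k`-connected. -/
theorem kExtendable_iff_stronglyConnected [Fintype V] (G : SimpleGraph V)
    (A B : Set V) (hbip : IsBipartition G A B) (hconn : G.Connected)
    (M : G.Subgraph) (hM : M.IsPerfectMatching) (k : ℕ) (hk : 1 ≤ k) :
    KExtendable G k ↔ StronglyKConnected (DGM G A M) k :=
  kExtendable_iff_stronglyConnected_general G A B hbip hconn M hM k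
end
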